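/- Let L be a Lie algebra over ℂ, and let y, h_1, …, h_n ∈ L and scalars c_1, …, c_n ∈ ℂ satisfy ⁅h_i, h_j⁆ = 0 for all 1 ≤ i, j ≤ n and ⁅y, h_i⁆ = c_i • y for all 1 ≤ i ≤ n. Then for all non-negative integers p_1, …, p_m and q_1, …, q_n, the following identity holds in the universal enveloping algebra U of the loop algebra of L: (∏_{j=1}^m ι(y t^{p_j})) · (∏_{i=1}^n ι(h_i t^{−q_i})) = Σ (∏_{i ∈ A_1∪…∪A_m} c_i) · (∏_{i ∈ {1,…,n}∖(A_1∪…∪A_m)} ι(h_i t^{−q_i})) · (∏_{j=1}^m ι(y t^{p_j − Σ_{i∈A_j} q_i})), where the sum runs over all m-tuples (A_1, …, A_m) of pairwise disjoint subsets of {1,…,n}. -/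

import Mathlib

open scoped TensorProduct Classical

/-!
Write `Y s = ι (y t^s)` and `H i = ι (h i t^(-q i))`. The `H i` commute, and the bracket
`⁅y t^s, h i t^(-q i)⁆ = c i • y t^(s - q i)` becomes the exchange rule
`Y s * H i = H i * Y s + c i • Y (s - q i)` in `U`. Moving one `Y s` to the right through the
product of the `H i` over `S`, each factor is either passed or absorbed (contributing `c i` and
lowering `s` by `q i`), giving a sum over the subsets `A ⊆ S` of absorbed indices. Moving the
`Y (p j)` through one after another, each only meets the `H i` not absorbed before, so the
absorbed sets are pairwise disjoint.
-/

noncomputable instance loopLieAlgebra (L : Type*) [LieRing L] [LieAlgebra ℂ L] :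
    LieAlgebra ℂ (LaurentPolynomial ℂ ⊗[ℂ] L) where
  lie_smul c x y := by
    rw [← algebraMap_smul (LaurentPolynomial ℂ) c y,
      LieAlgebra.lie_smul ((algebraMap ℂ (LaurentPolynomial ℂ)) c) x y, algebraMap_smul]

section CommProd

variable {M ι : Type*} [Monoid M] (f : ι → M) (hf : ∀ i j, Commute (f i) (f j))

noncomputable def commProd (s : Finset ι) : M :=
  s.noncommProd f fun i _ j _ _ => hf i j

@[simp]
theorem commProd_empty : commProd f hf ∅ = 1 := rfl

theorem commProd_insert [DecidableEq ι] {a : ι} {s : Finset ι} (ha : a ∉ s) :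
    commProd f hf (insert a s) = f a * commProd f hf s :=
  Finset.noncommProd_insert_of_notMem _ _ _ _ ha

theorem prod_map_sort_eq_commProd [LinearOrder ι] (s : Finset ι) :
    ((s.sort (· ≤ ·)).map f).prod = commProd f hf s := by
  rw [← Finset.noncommProd_toFinset _ f (fun i _ j _ _ => hf i j) (s.sort_nodup _)]
  exact Finset.noncommProd_congr (s.sort_toFinset _) (fun _ _ => rfl) _

end CommProd

theorem prod_ofFn_eq_commProd_univ {M : Type*} [Monoid M] {n : ℕ} (f : Fin n → M)
    (hf : ∀ i j, Commute (f i) (f j)) : (List.ofFn f).prod = commProd f hf Finset.univ := by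
  rw [List.ofFn_eq_map, ← Fin.sort_univ, prod_map_sort_eq_commProd]

theorem Fin.pairwise_cons_iff {β : Type*} {r : β → β → Prop} [Std.Symm r] {m : ℕ}
    (a : β) (f : Fin m → β) :
    Pairwise (fun j j' => r (cons (α := fun _ => β) a f j) (cons (α := fun _ => β) a f j')) ↔
      Pairwise (fun j j' => r (f j) (f j')) ∧ ∀ j, r a (f j) := by
  simp only [Pairwise, forall_fin_succ, cons_zero, cons_succ, ne_eq, not_true_eq_false,
    false_imp_iff, succ_ne_zero, (succ_ne_zero _).symm, succ_inj, not_false_eq_true, forall_const,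
    true_and]
  exact ⟨fun h => ⟨fun j => (h.2 j).2, h.1⟩,
    fun h => ⟨h.2, fun j => ⟨Std.Symm.symm _ _ (h.2 j), fun _ hne => h.1 hne⟩⟩⟩

theorem Finset.biUnion_univ_cons {α : Type*} [DecidableEq α] {m : ℕ} (a : Finset α)
    (A : Fin m → Finset α) :
    univ.biUnion (Fin.cons a A : Fin (m + 1) → Finset α) = a ∪ univ.biUnion A := by
  ext; simp [Fin.exists_fin_succ]

section ShiftRelation

open Finset

variable {R U G ι : Type*} [CommSemiring R] [Semiring U] [Algebra R U] [AddCommGroup G]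
  {Y : G → U} {H : ι → U} (hH : ∀ i j, Commute (H i) (H j)) {c : ι → R} {q : ι → G}

theorem mul_commProd_eq_sum_powerset [DecidableEq ι]
    (hYH : ∀ s i, Y s * H i = H i * Y s + c i • Y (s - q i)) (S : Finset ι) (s : G) :
    Y s * commProd H hH S =
      ∑ A ∈ S.powerset, (∏ i ∈ A, c i) • (commProd H hH (S \ A) * Y (s - ∑ i ∈ A, q i)) := by
  induction S using Finset.induction_on generalizing s with
  | empty => simp
  | @insert a S ha ih =>
    rw [commProd_insert H hH ha, ← mul_assoc, hYH, add_mul, mul_assoc, ih, smul_mul_assoc, ih,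
      sum_powerset_insert ha, mul_sum, smul_sum]
    congr 1
    · refine sum_congr rfl fun A hA => ?_
      have haA : a ∉ A := fun h => ha (mem_powerset.mp hA h)
      rw [insert_sdiff_of_notMem _ haA,
        commProd_insert H hH (fun h => ha (sdiff_subset h)), mul_smul_comm, mul_assoc]
    · refine sum_congr rfl fun A hA => ?_
      have haA : a ∉ A := fun h => ha (mem_powerset.mp hA h)
      rw [insert_sdiff_insert, sdiff_insert_of_notMem ha,
        prod_insert haA, sum_insert haA, smul_smul, sub_sub, mul_comm]

theorem mul_commProd_univ_sdiff_mul_eq_sum [Fintype ι] [DecidableEq ι]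
    (hYH : ∀ s i, Y s * H i = H i * Y s + c i • Y (s - q i)) (T : Finset ι) (s : G) (Z : U) :
    Y s * (commProd H hH (univ \ T) * Z) =
      ∑ A : Finset ι, if Disjoint A T then
        (∏ i ∈ A, c i) • (commProd H hH (univ \ (A ∪ T)) * (Y (s - ∑ i ∈ A, q i) * Z))
      else 0 := by
  have hdisj : univ.filter (Disjoint · T) = (univ \ T).powerset := by
    ext A
    simp [subset_sdiff]
  rw [← sum_filter, hdisj, ← mul_assoc, mul_commProd_eq_sum_powerset hH hYH,
    sum_mul]
  refine sum_congr rfl fun A _ => ?_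
  rw [smul_mul_assoc, mul_assoc, sdiff_sdiff_left, sup_eq_union, union_comm]

theorem prod_ofFn_mul_commProd_univ [Fintype ι] [DecidableEq ι]
    (hYH : ∀ s i, Y s * H i = H i * Y s + c i • Y (s - q i)) {m : ℕ} (p : Fin m → G) :
    (List.ofFn fun j => Y (p j)).prod * commProd H hH univ =
      ∑ A : Fin m → Finset ι,
        if Pairwise (fun j j' : Fin m => Disjoint (A j) (A j')) then
          (∏ i ∈ univ.biUnion A, c i) •
            (commProd H hH (univ \ univ.biUnion A) *
              (List.ofFn fun j => Y (p j - ∑ i ∈ A j, q i)).prod)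
        else 0 := by
  induction m with
  | zero => simp [Pairwise]
  | succ m ih =>
    rw [List.ofFn_succ, List.prod_cons, mul_assoc, ih, mul_sum,
      ← (Fin.consEquiv fun _ => Finset ι).sum_comp, Fintype.sum_prod_type, sum_comm]
    refine sum_congr rfl fun A _ => ?_
    have hcons : ∀ A₀, Pairwise (fun j j' => Disjoint (Fin.cons (α := fun _ => Finset ι) A₀ A j)
        (Fin.cons (α := fun _ => Finset ι) A₀ A j')) ↔
        Pairwise (fun j j' => Disjoint (A j) (A j')) ∧ Disjoint A₀ (univ.biUnion A) := by
      simp [Fin.pairwise_cons_iff, disjoint_biUnion_right]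
    have hconsEquiv : ∀ A₀, Fin.consEquiv (fun _ => Finset ι) (A₀, A) = Fin.cons A₀ A :=
      fun _ => rfl
    simp only [hconsEquiv, hcons, biUnion_univ_cons, Fin.cons_zero, Fin.cons_succ,
      List.ofFn_succ, List.prod_cons]
    by_cases hA : Pairwise (fun j j' => Disjoint (A j) (A j'))
    · simp only [hA, true_and, if_true]
      rw [mul_smul_comm, mul_commProd_univ_sdiff_mul_eq_sum hH hYH, smul_sum]
      refine sum_congr rfl fun A₀ _ => ?_
      split_ifs with h₀
      · rw [prod_union h₀, smul_smul, mul_comm]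
      · rw [smul_zero]
    · simp [hA]

end ShiftRelation

section

attribute [local instance 100] LieRing.ofAssociativeRing

theorem UniversalEnvelopingAlgebra.ι_mul_ι {R L : Type*} [CommRing R] [LieRing L]
    [LieAlgebra R L] (x y : L) : ι R x * ι R y = ι R y * ι R x + ι R ⁅x, y⁆ := by
  rw [LieHom.map_lie, Ring.lie_def, add_sub_cancel]

end

theorem LaurentPolynomial.T_tmul_lie_T_tmul {R L : Type*} [CommRing R] [LieRing L]
    [LieAlgebra R L] (a b : ℤ) (x y : L) :
    ⁅(T a : LaurentPolynomial R) ⊗ₜ[R] x, (T b : LaurentPolynomial R) ⊗ₜ[R] y⁆ =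
      T (a + b) ⊗ₜ ⁅x, y⁆ := by
  rw [LieAlgebra.ExtendScalars.bracket_tmul, T_add]

/-- If `⁅h i, h j⁆ = 0` and `⁅y, h i⁆ = c i • y` in `L`, then in the
universal enveloping algebra of the loop algebra of `L` we have
`(∏ⱼ ι(y t^{pⱼ})) ⬝ (∏ᵢ ι(hᵢ t^{-qᵢ})) = ∑ (∏_{i∈A₁∪…∪Aₘ} cᵢ) ⬝
(∏_{i∉A₁∪…∪Aₘ} ι(hᵢ t^{-qᵢ})) ⬝ (∏ⱼ ι(y t^{pⱼ - ∑_{i∈Aⱼ} qᵢ}))`, the sum running over all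
`m`-tuples `(A₁, …, Aₘ)` of pairwise disjoint subsets of `{1,…,n}`. -/
theorem statement1 (L : Type*) [LieRing L] [LieAlgebra ℂ L]
    (n m : ℕ) (y : L) (h : Fin n → L) (c : Fin n → ℂ)
    (hcomm : ∀ i j : Fin n, ⁅h i, h j⁆ = 0)
    (hy : ∀ i : Fin n, ⁅y, h i⁆ = c i • y)
    (p : Fin m → ℕ) (q : Fin n → ℕ) :
    (List.ofFn fun j : Fin m =>
        UniversalEnvelopingAlgebra.ι ℂ
          ((LaurentPolynomial.T (p j : ℤ) : LaurentPolynomial ℂ) ⊗ₜ[ℂ] y)).prod *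
      (List.ofFn fun i : Fin n =>
        UniversalEnvelopingAlgebra.ι ℂ
          ((LaurentPolynomial.T (-(q i : ℤ)) : LaurentPolynomial ℂ) ⊗ₜ[ℂ] h i)).prod =
    ∑ A : Fin m → Finset (Fin n),
      if Pairwise (fun j j' : Fin m => Disjoint (A j) (A j')) then
        (∏ i ∈ Finset.univ.biUnion A, c i) •
          ((((Finset.univ \ Finset.univ.biUnion A).sort (· ≤ ·)).map (fun i : Fin n =>
              UniversalEnvelopingAlgebra.ι ℂ
                ((LaurentPolynomial.T (-(q i : ℤ)) : LaurentPolynomial ℂ) ⊗ₜ[ℂ] h i))).prod *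
            (List.ofFn fun j : Fin m =>
              UniversalEnvelopingAlgebra.ι ℂ
                ((LaurentPolynomial.T ((p j : ℤ) - ∑ i ∈ A j, (q i : ℤ)) :
                    LaurentPolynomial ℂ) ⊗ₜ[ℂ] y)).prod)
      else 0 := by
  let Y : ℤ → UniversalEnvelopingAlgebra ℂ (LaurentPolynomial ℂ ⊗[ℂ] L) := fun s =>
    UniversalEnvelopingAlgebra.ι ℂ ((LaurentPolynomial.T s : LaurentPolynomial ℂ) ⊗ₜ y)
  let H : Fin n → UniversalEnvelopingAlgebra ℂ (LaurentPolynomial ℂ ⊗[ℂ] L) := fun i =>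
    UniversalEnvelopingAlgebra.ι ℂ
      ((LaurentPolynomial.T (-(q i : ℤ)) : LaurentPolynomial ℂ) ⊗ₜ[ℂ] h i)
  have hH : ∀ i j, Commute (H i) (H j) := fun i j => by
    rw [Commute, SemiconjBy, UniversalEnvelopingAlgebra.ι_mul_ι,
      LaurentPolynomial.T_tmul_lie_T_tmul, hcomm, TensorProduct.tmul_zero, map_zero, add_zero]
  have hYH : ∀ s i, Y s * H i = H i * Y s + c i • Y (s - q i) := fun s i => by
    rw [UniversalEnvelopingAlgebra.ι_mul_ι, LaurentPolynomial.T_tmul_lie_T_tmul, hy,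
      TensorProduct.tmul_smul, map_smul, ← sub_eq_add_neg]
  rw [prod_ofFn_eq_commProd_univ H hH, prod_ofFn_mul_commProd_univ hH hYH]
  simp only [← prod_map_sort_eq_commProd H hH]
  rfl
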